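/- Let C be a finitely generated free graded module over the ring of long power series ℛ with a grading-decreasing differential, and suppose H(C)/Tors(H(C)) is a free ℛ-module of rank r ≥ 1. Then the maximum of gr over homogeneous non-torsion classes of H(C) exists (i.e., the supremum is attained). -/

import Mathlib

open scoped NNReal

abbrev F2 := ZMod 2

/-- The ring of long power series `ℛ` over `𝔽₂`, realized as Hahn series over `ℝ_{≥0}`,
graded by `gr(v^α) = -α`. -/
abbrev LongR := HahnSeries ℝ≥0 F2

/-- A finitely generated free graded module over `ℛ` with a differential, presented by a
basis `Fin n` with real gradings `gr`. -/
structure RComplex where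
  n : ℕ
  gr : Fin n → ℝ
  d : (Fin n → LongR) →ₗ[LongR] (Fin n → LongR)

namespace RComplex

variable (G : RComplex)

/-- Homogeneous of degree `a`: the element `v^α x` has degree `gr x - α`. -/
def RHomog (a : ℝ) (f : Fin G.n → LongR) : Prop :=
  ∀ x α, (f x).coeff α ≠ 0 → G.gr x - (α : ℝ) = a

/-- The differential is grading-decreasing (it lowers degree by 1). -/
def GrDecreasing : Prop :=
  ∀ a f, G.RHomog a f → G.RHomog (a - 1) (G.d f)

noncomputable abbrev RCycles : Submodule LongR (Fin G.n → LongR) :=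
  LinearMap.ker G.d

/-- The homology of `G`, as an `ℛ`-module. -/
noncomputable abbrev RHomology :=
  G.RCycles ⧸ (LinearMap.range G.d).comap G.RCycles.subtype

/-- The set of gradings of homogeneous, non-torsion classes in the homology of `G`. -/
noncomputable def RUpsSet : Set ℝ :=
  {a | ∃ (f : Fin G.n → LongR) (hf : f ∈ G.RCycles),
    G.RHomog a f ∧
      ∀ r : LongR, r ≠ 0 →
        r • (Submodule.Quotient.mk ⟨f, hf⟩ : G.RHomology) ≠ 0}

end RComplex

/-!
Since `d` lowers degrees by one, in the given basis it is the matrix with entries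
`c y x • v ^ (gr y - gr x + 1)` for an `𝔽₂`-matrix `c`, so on the degree-`a` slices `d` acts as
`c`. If every `c`-cycle were a `c`-boundary, a generalized inverse `B` of `c` (`c B c = c`) would
give the map `S` with entries `B x y • v ^ (gr x - gr y + t - 1)`, and slicing shows
`d S = v ^ t` on cycles once `t` makes all exponents nonnegative: all of `H(C)` would be torsion,
contradicting rank `≥ 1`. So some `c`-cycle `z` is not a boundary, and its homogeneous lift is a
non-torsion class. Finally, a homogeneous non-torsion class of degree `a` is `v ^ (m - a)` times
one of degree `m = min gr` over its support, so the supremum is a maximum over the finite set of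
values of `gr`.
-/

theorem Matrix.exists_mul_mul_eq_self {K m n : Type*} [Field K] [Fintype m] [Fintype n]
    [DecidableEq m] [DecidableEq n] (A : Matrix m n K) : ∃ B : Matrix n m K, A * B * A = A := by
  obtain ⟨s, hs⟩ := A.mulVecLin.rangeRestrict.exists_rightInverse_of_surjective
    A.mulVecLin.range_rangeRestrict
  obtain ⟨g, hg⟩ := LinearMap.exists_extend s
  refine ⟨LinearMap.toMatrix' g, Matrix.toLin'.injective (LinearMap.ext fun u => ?_)⟩
  have := congr((LinearMap.range A.mulVecLin).subtype ($hs ⟨A.mulVec u, u, rfl⟩))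
  simpa [Matrix.toLin'_mul, ← hg, Matrix.mulVec_mulVec] using this

namespace HahnSeries

variable {R : Type*} [Semiring R]

/-- The coefficient of `s` at a real exponent; exponents `p < 0` give `0`. -/
noncomputable def realCoeff (p : ℝ) : HahnSeries ℝ≥0 R →+ R :=
  if 0 ≤ p then coeff.addMonoidHom p.toNNReal else 0

@[simp]
theorem realCoeff_coe (q : ℝ≥0) (s : HahnSeries ℝ≥0 R) : realCoeff q s = s.coeff q := by
  simp [realCoeff]

theorem realCoeff_of_neg {p : ℝ} (hp : p < 0) (s : HahnSeries ℝ≥0 R) : realCoeff p s = 0 := by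
  simp [realCoeff, not_le.2 hp]

theorem coeff_single_mul_of_lt {e q : ℝ≥0} (h : q < e) (c : R) (s : HahnSeries ℝ≥0 R) :
    (single e c * s).coeff q = 0 := by
  by_contra hq
  obtain ⟨u, hu, w, -, rfl⟩ := support_mul_subset ((mem_support _ _).2 hq)
  rw [support_single_subset hu] at h
  exact not_le.2 h le_self_add

theorem realCoeff_single_mul (e : ℝ≥0) (c : R) (s : HahnSeries ℝ≥0 R) (p : ℝ) :
    realCoeff p (single e c * s) = c * realCoeff (p - e) s := by
  rcases lt_or_ge p e with hpe | hpe
  · rw [realCoeff_of_neg (sub_neg.2 hpe), mul_zero]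
    rcases lt_or_ge p 0 with hp | hp
    · exact realCoeff_of_neg hp _
    · lift p to ℝ≥0 using hp
      rw [realCoeff_coe, coeff_single_mul_of_lt (by exact_mod_cast hpe)]
  · lift p to ℝ≥0 using e.2.trans hpe
    rw [← NNReal.coe_sub (by exact_mod_cast hpe), realCoeff_coe, realCoeff_coe,
      ← coeff_single_mul_add, tsub_add_cancel_of_le (by exact_mod_cast hpe)]

theorem realCoeff_single {e : ℝ} (he : 0 ≤ e) (c : R) (p : ℝ) :
    realCoeff p (single e.toNNReal c) = if p = e then c else 0 := by
  rcases lt_or_ge p 0 with hp | hp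
  · rw [realCoeff_of_neg hp, if_neg (by linarith)]
  · lift p to ℝ≥0 using hp
    rw [realCoeff_coe, coeff_single, ← NNReal.coe_inj, Real.coe_toNNReal _ he]

end HahnSeries

namespace RComplex

open HahnSeries Matrix

variable (G : RComplex)

/-- The degree-`a` part of `f`, as an `𝔽₂`-vector. -/
noncomputable def slice (a : ℝ) (f : Fin G.n → LongR) : Fin G.n → F2 :=
  fun x => realCoeff (G.gr x - a) (f x)

noncomputable def homogOfSlice (a : ℝ) (z : Fin G.n → F2) : Fin G.n → LongR :=
  fun x => single (G.gr x - a).toNNReal (z x)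

noncomputable def monomialMatrix (A : Matrix (Fin G.n) (Fin G.n) F2) (k : ℝ) :
    Matrix (Fin G.n) (Fin G.n) LongR :=
  Matrix.of fun y x => single (G.gr y - G.gr x + k).toNNReal (A y x)

/-- The `(y, x)` entry is the coefficient of `v ^ (gr y - gr x + 1) • y` in `d x`. -/
noncomputable def diffMatrix : Matrix (Fin G.n) (Fin G.n) F2 :=
  Matrix.of fun y x => G.slice (G.gr x - 1) (G.d (Pi.single x 1)) y

variable {G}

@[simp]
theorem slice_zero (a : ℝ) : G.slice a 0 = 0 := by
  funext x
  simp [slice]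

theorem ext_slice {f g : Fin G.n → LongR} (h : ∀ a, G.slice a f = G.slice a g) : f = g := by
  funext x
  ext q
  simpa [slice] using congr_fun (h (G.gr x - q)) x

theorem le_gr_of_slice_ne_zero {a : ℝ} {f : Fin G.n → LongR} {x : Fin G.n}
    (h : G.slice a f x ≠ 0) : a ≤ G.gr x := by
  by_contra! hlt
  exact h (realCoeff_of_neg (by linarith) _)

theorem slice_single_smul (t : ℝ≥0) (c : F2) (f : Fin G.n → LongR) (a : ℝ) :
    G.slice (a - t) (single t c • f) = c • G.slice a f := by
  funext x
  simp [slice, realCoeff_single_mul, sub_sub]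

@[simp]
theorem homogOfSlice_zero (a : ℝ) : G.homogOfSlice a 0 = 0 := by
  funext x
  simp [homogOfSlice]

section homogOfSlice

variable {a : ℝ} {z : Fin G.n → F2}

theorem slice_homogOfSlice (hz : ∀ x, z x ≠ 0 → a ≤ G.gr x) (b : ℝ) :
    G.slice b (G.homogOfSlice a z) = if b = a then z else 0 := by
  funext x
  by_cases hzx : z x = 0
  · split_ifs <;> simp [slice, homogOfSlice, hzx]
  · rw [slice, homogOfSlice, realCoeff_single (sub_nonneg.2 (hz x hzx))]
    split_ifs <;> simp_all

theorem rHomog_homogOfSlice (hz : ∀ x, z x ≠ 0 → a ≤ G.gr x) :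
    G.RHomog a (G.homogOfSlice a z) := by
  intro x α hα
  rw [homogOfSlice, coeff_single] at hα
  split_ifs at hα with hαx
  · rw [hαx, Real.coe_toNNReal _ (sub_nonneg.2 (hz x hα))]
    ring
  · exact absurd rfl hα

theorem slice_eq_zero_of_rHomog {f : Fin G.n → LongR} (hf : G.RHomog a f) {b : ℝ}
    (hb : b ≠ a) : G.slice b f = 0 := by
  funext x
  rcases lt_or_ge (G.gr x - b) 0 with hx | hx
  · exact realCoeff_of_neg hx _
  · rw [slice, ← Real.coe_toNNReal _ hx, realCoeff_coe]
    by_contra hne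
    exact hb (by simpa [Real.coe_toNNReal _ hx] using hf x _ hne)

theorem homogOfSlice_slice {f : Fin G.n → LongR} (hf : G.RHomog a f) :
    G.homogOfSlice a (G.slice a f) = f := by
  refine ext_slice fun b => ?_
  rw [slice_homogOfSlice fun x => le_gr_of_slice_ne_zero]
  split_ifs with hb
  · rw [hb]
  · rw [slice_eq_zero_of_rHomog hf hb]

theorem single_smul_homogOfSlice {b : ℝ} (hab : a ≤ b) (hz : ∀ x, z x ≠ 0 → b ≤ G.gr x) :
    single (b - a).toNNReal (1 : F2) • G.homogOfSlice b z = G.homogOfSlice a z := by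
  funext x
  by_cases hzx : z x = 0
  · simp [homogOfSlice, hzx]
  · rw [Pi.smul_apply, smul_eq_mul, homogOfSlice, homogOfSlice, single_mul_single, one_mul,
      ← Real.toNNReal_add (sub_nonneg.2 hab) (sub_nonneg.2 (hz x hzx))]
    ring_nf

theorem slice_smul_homogOfSlice (hz : ∀ x, z x ≠ 0 → a ≤ G.gr x) (r : LongR) (t : ℝ≥0) :
    G.slice (a - t) (r • G.homogOfSlice a z) = r.coeff t • z := by
  funext x
  by_cases hzx : z x = 0
  · simp [slice, homogOfSlice, hzx]
  · rw [slice, Pi.smul_apply, smul_eq_mul, homogOfSlice, mul_comm, realCoeff_single_mul,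
      Real.coe_toNNReal _ (sub_nonneg.2 (hz x hzx))]
    simp [mul_comm]

end homogOfSlice

theorem rHomog_single (x : Fin G.n) : G.RHomog (G.gr x) (Pi.single x 1) := by
  intro y α hα
  rcases eq_or_ne y x with rfl | hyx
  · rw [Pi.single_eq_same, coeff_one] at hα
    split_ifs at hα with hα0
    · simp [hα0]
    · exact absurd rfl hα
  · simp [Pi.single_eq_of_ne hyx] at hα

theorem slice_monomialMatrix_mulVec {A : Matrix (Fin G.n) (Fin G.n) F2} {k : ℝ}
    (hA : ∀ y x, A y x ≠ 0 → 0 ≤ G.gr y - G.gr x + k) (f : Fin G.n → LongR) (a : ℝ) :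
    G.slice (a - k) (G.monomialMatrix A k *ᵥ f) = A *ᵥ G.slice a f := by
  funext y
  simp only [slice, mulVec, dotProduct, map_sum]
  refine Finset.sum_congr rfl fun x _ => ?_
  by_cases hyx : A y x = 0
  · simp [monomialMatrix, hyx]
  · rw [monomialMatrix, of_apply, realCoeff_single_mul, Real.coe_toNNReal _ (hA y x hyx)]
    ring_nf

theorem d_eq_monomialMatrix_mulVec (hd : G.GrDecreasing) (f : Fin G.n → LongR) :
    G.d f = G.monomialMatrix G.diffMatrix 1 *ᵥ f := by
  suffices G.d = Matrix.toLin' (G.monomialMatrix G.diffMatrix 1) from congr($this f)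
  refine (Pi.basisFun LongR (Fin G.n)).ext fun x => ?_
  rw [Pi.basisFun_apply, Matrix.toLin'_apply, mulVec_single_one,
    ← homogOfSlice_slice (hd _ _ (rHomog_single x))]
  funext y
  simp only [homogOfSlice, monomialMatrix, diffMatrix, col_apply, of_apply]
  ring_nf

theorem slice_d (hd : G.GrDecreasing) (f : Fin G.n → LongR) (a : ℝ) :
    G.slice (a - 1) (G.d f) = G.diffMatrix *ᵥ G.slice a f := by
  rw [d_eq_monomialMatrix_mulVec hd]
  refine slice_monomialMatrix_mulVec (fun y x hyx => ?_) f a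
  have := le_gr_of_slice_ne_zero hyx
  linarith

theorem smul_mk_eq_zero_iff {f : Fin G.n → LongR} (hf : f ∈ G.RCycles) (r : LongR) :
    r • (Submodule.Quotient.mk ⟨f, hf⟩ : G.RHomology) = 0 ↔ ∃ w, G.d w = r • f := by
  rw [← Submodule.Quotient.mk_smul, Submodule.Quotient.mk_eq_zero, Submodule.mem_comap,
    LinearMap.mem_range]
  rfl

theorem mem_rUpsSet_iff {a : ℝ} :
    a ∈ G.RUpsSet ↔
      ∃ f, G.d f = 0 ∧ G.RHomog a f ∧ ∀ r : LongR, r ≠ 0 → ∀ w, G.d w ≠ r • f := by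
  simp only [RUpsSet, Set.mem_ofPred_eq, ne_eq, smul_mk_eq_zero_iff, not_exists,
    LinearMap.mem_ker, exists_prop]

theorem mem_rUpsSet_of_notMem_range (hd : G.GrDecreasing) {z : Fin G.n → F2}
    (hz : G.diffMatrix *ᵥ z = 0) (hzr : ∀ u, G.diffMatrix *ᵥ u ≠ z) {a : ℝ}
    (ha : ∀ x, z x ≠ 0 → a ≤ G.gr x) : a ∈ G.RUpsSet := by
  refine mem_rUpsSet_iff.2 ⟨G.homogOfSlice a z, ext_slice fun b => ?_,
    rHomog_homogOfSlice ha, fun r hr w hw => hzr (G.slice (a - r.order + 1) w) ?_⟩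
  · rw [← add_sub_cancel_right b 1, slice_d hd, slice_homogOfSlice ha]
    split_ifs <;> simp [hz]
  · have hcoeff : r.coeff r.order = 1 := Fin.eq_one_of_ne_zero _ (coeff_order_eq_zero.not.2 hr)
    rw [← slice_d hd, add_sub_cancel_right, hw, slice_smul_homogOfSlice ha, hcoeff, one_smul]

theorem exists_d_eq_single_smul (hd : G.GrDecreasing)
    (hex : ∀ z, G.diffMatrix *ᵥ z = 0 → ∃ u, G.diffMatrix *ᵥ u = z) :
    ∃ t : ℝ≥0, ∀ f, G.d f = 0 → ∃ w, G.d w = single t (1 : F2) • f := by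
  obtain ⟨B, hB⟩ := G.diffMatrix.exists_mul_mul_eq_self
  obtain ⟨M, hM⟩ := (Set.finite_range G.gr).bddAbove
  obtain ⟨μ, hμ⟩ := (Set.finite_range G.gr).bddBelow
  set t := (M - μ + 1).toNNReal
  have hB' : ∀ y x, B y x ≠ 0 → 0 ≤ G.gr y - G.gr x + (t - 1) := fun y x _ => by
    have := Real.le_coe_toNNReal (M - μ + 1)
    have := hM ⟨x, rfl⟩
    have := hμ ⟨y, rfl⟩
    linarith
  refine ⟨t, fun f hf => ⟨G.monomialMatrix B (t - 1) *ᵥ f, ext_slice fun a => ?_⟩⟩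
  obtain ⟨u, hu⟩ := hex (G.slice (a + t) f) (by rw [← slice_d hd, hf, slice_zero])
  calc G.slice a (G.d (G.monomialMatrix B (t - 1) *ᵥ f))
      = G.diffMatrix *ᵥ G.slice (a + t - (t - 1)) (G.monomialMatrix B (t - 1) *ᵥ f) := by
        rw [← slice_d hd, show a + t - (t - 1) - 1 = a by ring]
    _ = G.diffMatrix *ᵥ B *ᵥ G.diffMatrix *ᵥ u := by
        rw [slice_monomialMatrix_mulVec hB', hu]
    _ = G.slice (a + t) f := by rw [mulVec_mulVec, mulVec_mulVec, hB, hu]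
    _ = G.slice a (single t (1 : F2) • f) := by
        simpa using (slice_single_smul t (1 : F2) f (a + t)).symm

theorem mem_torsion_of_forall_exists_mulVec_eq (hd : G.GrDecreasing)
    (hex : ∀ z, G.diffMatrix *ᵥ z = 0 → ∃ u, G.diffMatrix *ᵥ u = z) (h : G.RHomology) :
    h ∈ Submodule.torsion LongR G.RHomology := by
  obtain ⟨⟨f, hf⟩, rfl⟩ := Submodule.Quotient.mk_surjective _ h
  obtain ⟨t, ht⟩ := exists_d_eq_single_smul hd hex
  exact ⟨⟨single t 1, mem_nonZeroDivisors_of_ne_zero (single_ne_zero one_ne_zero)⟩,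
    (smul_mk_eq_zero_iff hf _).2 (ht f hf)⟩

theorem exists_gr_mem_rUpsSet_of_mem {a : ℝ} (ha : a ∈ G.RUpsSet) :
    ∃ x, a ≤ G.gr x ∧ G.gr x ∈ G.RUpsSet := by
  obtain ⟨f, hf, hhom, hnt⟩ := mem_rUpsSet_iff.1 ha
  set z := G.slice a f
  have hfz : G.homogOfSlice a z = f := homogOfSlice_slice hhom
  have hz : z ≠ 0 := by
    rintro hz
    exact hnt 1 one_ne_zero 0 (by rw [← hfz, hz, homogOfSlice_zero, smul_zero, map_zero])
  obtain ⟨x₀, hx₀, hmin⟩ := (Finset.univ.filter (z · ≠ 0)).exists_min_image G.gr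
    (by simpa [Finset.filter_nonempty_iff, Function.ne_iff] using hz)
  have hzm : ∀ x, z x ≠ 0 → G.gr x₀ ≤ G.gr x := fun x hx => hmin x (by simpa using hx)
  have hax : a ≤ G.gr x₀ := le_gr_of_slice_ne_zero (by simpa using hx₀)
  set s : LongR := single (G.gr x₀ - a).toNNReal 1
  have hs : s ≠ 0 := single_ne_zero one_ne_zero
  have hfg : s • G.homogOfSlice (G.gr x₀) z = f := (single_smul_homogOfSlice hax hzm).trans hfz
  refine ⟨x₀, hax, mem_rUpsSet_iff.2 ⟨_, ?_, rHomog_homogOfSlice hzm,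
    fun r hr w hw => hnt r hr (s • w) ?_⟩⟩
  · rw [← hfg, map_smul] at hf
    exact (smul_eq_zero.1 hf).resolve_left hs
  · rw [map_smul, hw, smul_comm, hfg]

end RComplex

/-- Let `C` be a finitely generated free graded module over `ℛ` with a grading-decreasing
differential, such that `H(C)/Tors(H(C))` is a free `ℛ`-module of rank `r ≥ 1`.  Then the
maximum of the grading over homogeneous non-torsion classes of `H(C)` exists (the
supremum is attained). -/
theorem upsSet_isGreatest (G : RComplex) (hd : G.GrDecreasing) (r : ℕ) (hr : 1 ≤ r)
    (hfree : Nonempty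
      ((G.RHomology ⧸ Submodule.torsion LongR G.RHomology) ≃ₗ[LongR] (Fin r → LongR))) :
    ∃ u : ℝ, IsGreatest G.RUpsSet u := by
  obtain ⟨e⟩ := hfree
  have : Nonempty (Fin r) := ⟨⟨0, hr⟩⟩
  have htors : Submodule.torsion LongR G.RHomology ≠ ⊤ := by
    rw [← Submodule.Quotient.nontrivial_iff]
    exact e.toEquiv.nontrivial
  obtain ⟨z, hz, hzr⟩ : ∃ z, G.diffMatrix.mulVec z = 0 ∧ ∀ u, G.diffMatrix.mulVec u ≠ z := by
    by_contra! hex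
    exact htors <| eq_top_iff.2 fun h _ =>
      RComplex.mem_torsion_of_forall_exists_mulVec_eq hd hex h
  obtain ⟨a, ha⟩ := (Set.finite_range G.gr).bddBelow
  obtain ⟨x, -, hx⟩ := RComplex.exists_gr_mem_rUpsSet_of_mem
    (RComplex.mem_rUpsSet_of_notMem_range hd hz hzr fun x _ => ha ⟨x, rfl⟩)
  obtain ⟨u, hu, hmax⟩ := Set.exists_max_image (G.RUpsSet ∩ Set.range G.gr) id
    ((Set.finite_range _).inter_of_right _) ⟨_, hx, x, rfl⟩
  refine ⟨u, hu.1, fun b hb => ?_⟩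
  obtain ⟨y, hby, hy⟩ := RComplex.exists_gr_mem_rUpsSet_of_mem hb
  exact hby.trans (hmax _ ⟨hy, y, rfl⟩)
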